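/- For H ∈ (0,1) and K ∈ (0,1], the increment second moment of the bifractional Brownian motion satisfies 2^{-K}|t-s|^{2HK} ≤ E|B^{H,K}_t - B^{H,K}_s|^2 ≤ 2^{1-K}|t-s|^{2HK}, where E|B^{H,K}_t - B^{H,K}_s|^2 = R(t,t)+R(s,s)-2R(t,s) with R = R^{H,K}. -/
import Mathlib

open Real

-- subadditivity of rpow for p ∈ (0,1]
private lemma rpow_subadd {u v p : ℝ} (hu : 0 ≤ u) (hv : 0 ≤ v) (hp0 : 0 ≤ p) (hp1 : p ≤ 1) :
    (u + v) ^ p ≤ u ^ p + v ^ p := by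
  have h := NNReal.rpow_add_le_add_rpow u.toNNReal v.toNNReal hp0 hp1
  have h2 := NNReal.coe_le_coe.2 h
  push_cast at h2
  rwa [Real.coe_toNNReal u hu, Real.coe_toNNReal v hv] at h2

private lemma two_mul_le_two_rpow {K : ℝ} (h1 : 1/2 ≤ K) (h2 : K ≤ 1) : 2*K ≤ (2:ℝ)^K := by
  have hb : (2:ℝ)^(1-K) ≤ 2 - K := by
    have h := rpow_one_add_le_one_add_mul_self (s := 1) (by norm_num) (p := 1-K)
      (by linarith) (by linarith)
    norm_num at h
    linarith
  have hprod : (2:ℝ)^K * 2^(1-K) = 2 := by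
    rw [← Real.rpow_add two_pos]; norm_num
  have hp1 : (0:ℝ) < 2^(1-K) := Real.rpow_pos_of_pos two_pos _
  have h3 : 2*K*(2-K) ≤ 2 := by nlinarith [sq_nonneg (K-1)]
  have h4 : 2*K*2^(1-K) ≤ 2 :=
    le_trans (mul_le_mul_of_nonneg_left hb (by linarith)) h3
  have h5 : 2*K*2^(1-K) ≤ 2^K*2^(1-K) := by rw [hprod]; exact h4
  exact le_of_mul_le_mul_right h5 hp1

private lemma scalar_small {K : ℝ} (h0 : 0 < K) : 2*K + 2 - (2:ℝ)^(2*K) ≤ (2:ℝ)^K := by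
  have l2 : (0.6931471803:ℝ) < Real.log 2 := Real.log_two_gt_d9
  have b1 : Real.log 2 * K + 1 ≤ (2:ℝ)^K := by
    rw [Real.rpow_def_of_pos two_pos]; exact Real.add_one_le_exp _
  have b2 : Real.log 2 * (2*K) + 1 ≤ (2:ℝ)^(2*K) := by
    rw [Real.rpow_def_of_pos two_pos]; exact Real.add_one_le_exp _
  have hnn : 0 ≤ K * (3 * Real.log 2 - 2) := mul_nonneg h0.le (by linarith)
  nlinarith [b1, b2]

private lemma pnorm {K t : ℝ} (hK0 : 0 < K) (hK1 : K ≤ 1) (ht0 : 0 ≤ t) (ht1 : t ≤ 1) :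
    2 * (1 + t^2) ^ K ≤ (1+t) ^ (2*K) + (1-t) ^ (2*K) + 2^K * t^(2*K) := by
  have h2K0 : 0 < 2*K := by linarith
  rcases eq_or_lt_of_le ht0 with h0 | ht0'
  · -- t = 0
    rw [← h0]
    norm_num
    positivity
  rcases eq_or_lt_of_le ht1 with h1 | ht1'
  · -- t = 1
    rw [h1]
    norm_num [Real.zero_rpow (ne_of_gt h2K0), Real.one_rpow]
    have : (2:ℝ)^K ≤ 2^(2*K) :=
      Real.rpow_le_rpow_of_exponent_le one_le_two (by linarith)
    linarith
  -- 0 < t < 1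
  have bern3 : (1 + t^2) ^ K ≤ 1 + K * t^2 :=
    rpow_one_add_le_one_add_mul_self (by nlinarith) hK0.le hK1
  have ht2r : t ^ ((2:ℕ):ℝ) = t^2 := Real.rpow_natCast t 2
  rcases le_or_gt (1/2) K with hKhalf | hKhalf
  · -- K ∈ [1/2, 1]
    have bern1 : 1 + (2*K) * t ≤ (1+t) ^ (2*K) :=
      one_add_mul_self_le_rpow_one_add (by linarith) (by linarith)
    have bern2 : 1 + (2*K) * (-t) ≤ (1 + (-t)) ^ (2*K) :=
      one_add_mul_self_le_rpow_one_add (by linarith) (by linarith)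
    rw [show 1 + (-t) = 1 - t by ring] at bern2
    have htt : t^((2:ℝ)) ≤ t^(2*K) :=
      Real.rpow_le_rpow_of_exponent_ge ht0' ht1 (by linarith)
    have htt' : t^2 ≤ t^(2*K) := by
      rw [← ht2r] at *; push_cast at htt ⊢; exact htt
    have hfac : 2*K*t^2 ≤ 2^K * t^(2*K) := by
      have := two_mul_le_two_rpow hKhalf hK1
      have h2 : 2*K*t^2 ≤ 2*K*t^(2*K) := by
        apply mul_le_mul_of_nonneg_left htt' (by linarith)
      have h3 : 2*K*t^(2*K) ≤ 2^K*t^(2*K) :=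
        mul_le_mul_of_nonneg_right this (Real.rpow_nonneg ht0 _)
      linarith
    linarith
  · -- K ∈ (0, 1/2)
    have h2K1 : 2*K ≤ 1 := by linarith
    -- chord : (1-t) * 1 + t * 2^(2K) ≤ (1+t)^(2K)
    have hcc := (Real.concaveOn_rpow (by linarith : (0:ℝ) ≤ 2*K) h2K1).2
      (Set.mem_Ici.2 (by norm_num : (0:ℝ) ≤ 1)) (Set.mem_Ici.2 (by norm_num : (0:ℝ) ≤ 2))
      (by linarith : 0 ≤ 1 - t) (le_of_lt ht0') (by ring)
    simp only [smul_eq_mul] at hcc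
    rw [show (1-t)*1 + t*2 = 1 + t by ring, Real.one_rpow] at hcc
    have iil : 1 - t ≤ (1-t)^(2*K) := by
      have := Real.rpow_le_rpow_of_exponent_ge (by linarith : 0 < 1 - t)
        (by linarith) h2K1
      rwa [Real.rpow_one] at this
    have htK : t ≤ t^(2*K) := by
      have := Real.rpow_le_rpow_of_exponent_ge ht0' ht1 h2K1
      rwa [Real.rpow_one] at this
    have h22K : (2:ℝ)^(2*K) ≤ 2 := by
      have := Real.rpow_le_rpow_of_exponent_le one_le_two h2K1
      rwa [Real.rpow_one] at this
    have htsq : t^2 ≤ t := by nlinarith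
    have step0 : 2*K*t^2 ≤ 2*K*t := mul_le_mul_of_nonneg_left htsq (by linarith)
    have c1 : 0 ≤ 2*K + 2 - 2^(2*K) := by linarith
    have step1 : (2*K + 2 - 2^(2*K))*t ≤ (2*K + 2 - 2^(2*K))*t^(2*K) :=
      mul_le_mul_of_nonneg_left htK c1
    have step2 : (2*K + 2 - 2^(2*K))*t^(2*K) ≤ 2^K*t^(2*K) :=
      mul_le_mul_of_nonneg_right (scalar_small hK0) (Real.rpow_nonneg ht0 _)
    linarith

private lemma pprime {K a b : ℝ} (hK0 : 0 < K) (hK1 : K ≤ 1) (hb : 0 ≤ b) (hba : b ≤ a) :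
    2 * (a^2 + b^2) ^ K ≤ (a+b) ^ (2*K) + (a-b) ^ (2*K) + 2^K * b^(2*K) := by
  have h2K0 : 0 < 2*K := by linarith
  have ha : 0 ≤ a := hb.trans hba
  rcases eq_or_lt_of_le ha with h0 | ha'
  · -- a = 0, hence b = 0
    have hb0 : b = 0 := le_antisymm (hba.trans_eq h0.symm) hb
    rw [← h0, hb0]
    norm_num [Real.zero_rpow (ne_of_gt hK0), Real.zero_rpow (ne_of_gt h2K0)]
  · set u := b / a with hu
    have hu0 : 0 ≤ u := div_nonneg hb ha'.le
    have hu1 : u ≤ 1 := (div_le_one ha').2 hba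
    have PN := pnorm hK0 hK1 hu0 hu1
    have hM : (0:ℝ) ≤ a^(2*K) := Real.rpow_nonneg ha _
    have hsq : a^(2*K) = (a^2)^K := by
      rw [← Real.rpow_natCast a 2, ← Real.rpow_mul ha]
      norm_num
    have eA : a^(2*K) * (1+u^2)^K = (a^2+b^2)^K := by
      rw [hsq, ← Real.mul_rpow (by positivity) (by positivity)]
      congr 1
      rw [hu]
      field_simp
    have eB : a^(2*K) * (1+u)^(2*K) = (a+b)^(2*K) := by
      rw [← Real.mul_rpow ha (by linarith)]
      congr 1
      rw [hu]
      field_simp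
    have eC : a^(2*K) * (1-u)^(2*K) = (a-b)^(2*K) := by
      rw [← Real.mul_rpow ha (by linarith)]
      congr 1
      rw [hu]
      field_simp
    have eD : a^(2*K) * u^(2*K) = b^(2*K) := by
      rw [← Real.mul_rpow ha hu0]
      congr 1
      rw [hu]
      field_simp
    have key := mul_le_mul_of_nonneg_left PN hM
    calc 2 * (a^2 + b^2) ^ K = a^(2*K) * (2 * (1+u^2)^K) := by rw [← eA]; ring
      _ ≤ a^(2*K) * ((1+u)^(2*K) + (1-u)^(2*K) + 2^K * u^(2*K)) := key
      _ = (a+b)^(2*K) + (a-b)^(2*K) + 2^K * b^(2*K) := by rw [← eB, ← eC, ← eD]; ring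

private lemma concave_bound {K a b : ℝ} (hK0 : 0 < K) (hK1 : K ≤ 1) (ha : 0 ≤ a) (hb : 0 ≤ b) :
    a^K + b^K ≤ 2^(1-K) * (a+b)^K := by
  have hcc := (Real.concaveOn_rpow hK0.le hK1).2 (Set.mem_Ici.2 ha) (Set.mem_Ici.2 hb)
    (by norm_num : (0:ℝ) ≤ 1/2) (by norm_num : (0:ℝ) ≤ 1/2) (by norm_num)
  simp only [smul_eq_mul] at hcc
  rw [show (1/2)*a + (1/2)*b = (a+b)/2 by ring] at hcc
  rw [Real.div_rpow (by linarith) (by norm_num)] at hcc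
  have hid : (2:ℝ)^(1-K) = 2/2^K := by
    rw [Real.rpow_sub two_pos, Real.rpow_one]
  rw [hid]
  have h2 : (2/(2:ℝ)^K)*(a+b)^K = 2*((a+b)^K/2^K) := by ring
  rw [h2]
  linarith

private lemma main_le (H K : ℝ) (hH : H ∈ Set.Ioo (0:ℝ) 1) (hK : K ∈ Set.Ioc (0:ℝ) 1)
    (R : ℝ → ℝ → ℝ)
    (hR : ∀ t s, R t s = 2 ^ (-K) * ((t ^ (2*H) + s ^ (2*H)) ^ K - |t - s| ^ (2*H*K)))
    (s t : ℝ) (hs : 0 ≤ s) (hst : s ≤ t) :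
    2 ^ (-K) * (t - s) ^ (2*H*K) ≤ R t t + R s s - 2 * R t s ∧
      R t t + R s s - 2 * R t s ≤ 2 ^ (1-K) * (t - s) ^ (2*H*K) := by
  obtain ⟨hH0, hH1⟩ := hH
  obtain ⟨hK0, hK1⟩ := hK
  have ht : 0 ≤ t := hs.trans hst
  have hts : 0 ≤ t - s := by linarith
  have hne : 2*H*K ≠ 0 := by positivity
  have h1 : (2:ℝ)^(-K) * 2^K = 1 := by rw [← Real.rpow_add two_pos]; norm_num
  have h2 : 2*(2:ℝ)^(-K) = 2^(1-K) := by
    rw [Real.rpow_sub two_pos, Real.rpow_one, Real.rpow_neg (by norm_num : (0:ℝ) ≤ 2)]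
    ring
  have habs : |t - s| = t - s := abs_of_nonneg hts
  have hE : R t t + R s s - 2 * R t s
      = (t^(2*H))^K + (s^(2*H))^K - 2^(1-K)*((t^(2*H)+s^(2*H))^K)
        + 2^(1-K)*((t-s)^(2*H*K)) := by
    rw [hR t t, hR s s, hR t s, habs]
    simp only [sub_self, abs_zero, Real.zero_rpow hne, sub_zero]
    rw [← two_mul (t^(2*H)), ← two_mul (s^(2*H)),
      Real.mul_rpow (by norm_num : (0:ℝ) ≤ 2) (Real.rpow_nonneg ht _),
      Real.mul_rpow (by norm_num : (0:ℝ) ≤ 2) (Real.rpow_nonneg hs _)]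
    linear_combination ((t^(2*H))^K + (s^(2*H))^K)*h1
      + ((t-s)^(2*H*K) - (t^(2*H)+s^(2*H))^K)*h2
  have hx : 0 ≤ t^H := Real.rpow_nonneg ht H
  have hy : 0 ≤ s^H := Real.rpow_nonneg hs H
  have hyx : s^H ≤ t^H := Real.rpow_le_rpow hs hst hH0.le
  have P := pprime (K := K) (a := t^H + s^H) (b := t^H - s^H) hK0 hK1
    (by linarith) (by linarith)
  rw [show t^H + s^H + (t^H - s^H) = 2*(t^H) by ring,
      show t^H + s^H - (t^H - s^H) = 2*(s^H) by ring,
      show (t^H + s^H)^2 + (t^H - s^H)^2 = 2*((t^H)^2 + (s^H)^2) by ring] at P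
  rw [Real.mul_rpow (by norm_num : (0:ℝ) ≤ 2) hx,
      Real.mul_rpow (by norm_num : (0:ℝ) ≤ 2) hy,
      Real.mul_rpow (by norm_num : (0:ℝ) ≤ 2)
        (by positivity : (0:ℝ) ≤ (t^H)^2 + (s^H)^2)] at P
  have ex : (t^H)^2 = t^(2*H) := by
    rw [← Real.rpow_natCast (t^H) 2, ← Real.rpow_mul ht]
    congr 1
    push_cast
    ring
  have ey : (s^H)^2 = s^(2*H) := by
    rw [← Real.rpow_natCast (s^H) 2, ← Real.rpow_mul hs]
    congr 1
    push_cast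
    ring
  have exK : (t^H)^(2*K) = (t^(2*H))^K := by
    rw [← Real.rpow_mul ht, ← Real.rpow_mul ht]
    congr 1
    ring
  have eyK : (s^H)^(2*K) = (s^(2*H))^K := by
    rw [← Real.rpow_mul hs, ← Real.rpow_mul hs]
    congr 1
    ring
  have eDeq : ((t-s)^H)^(2*K) = (t-s)^(2*H*K) := by
    rw [← Real.rpow_mul hts]
    congr 1
    ring
  have hsubadd : t^H ≤ (t-s)^H + s^H := by
    have h := rpow_subadd hts hs hH0.le hH1.le
    rwa [show t - s + s = t by ring] at h
  have hDle : (t^H - s^H)^(2*K) ≤ (t-s)^(2*H*K) := by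
    rw [← eDeq]
    exact Real.rpow_le_rpow (by linarith) (by linarith) (by linarith)
  rw [ex, ey, exK, eyK] at P
  have h2K : (2:ℝ)^(2*K) = 2^K * 2^K := by
    rw [← Real.rpow_add two_pos]
    congr 1
    ring
  have hc : (0:ℝ) < 2^K := Real.rpow_pos_of_pos two_pos K
  rw [h2K] at P
  have hd2 := mul_le_mul_of_nonneg_left hDle hc.le
  have M : 2*((t^(2*H)+s^(2*H))^K)
      ≤ 2^K*((t^(2*H))^K) + 2^K*((s^(2*H))^K) + (t-s)^(2*H*K) := by
    apply le_of_mul_le_mul_left _ hc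
    calc (2:ℝ)^K*(2*((t^(2*H)+s^(2*H))^K))
        = 2*(2^K*((t^(2*H)+s^(2*H))^K)) := by ring
      _ ≤ 2^K*2^K*((t^(2*H))^K) + 2^K*2^K*((s^(2*H))^K) + 2^K*((t-s)^(2*H*K)) := by
          linarith
      _ = 2^K*(2^K*((t^(2*H))^K) + 2^K*((s^(2*H))^K) + (t-s)^(2*H*K)) := by ring
  have i1 : (2:ℝ)^K*2^(1-K) = 2 := by rw [← Real.rpow_add two_pos]; norm_num
  have i2 : (2:ℝ)^K*2^(-K) = 1 := by rw [← Real.rpow_add two_pos]; norm_num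
  have LOW : 2^(1-K)*((t^(2*H)+s^(2*H))^K)
      ≤ (t^(2*H))^K + (s^(2*H))^K + 2^(-K)*((t-s)^(2*H*K)) := by
    apply le_of_mul_le_mul_left _ hc
    calc (2:ℝ)^K*(2^(1-K)*((t^(2*H)+s^(2*H))^K))
        = 2*((t^(2*H)+s^(2*H))^K) := by rw [← mul_assoc, i1]
      _ ≤ 2^K*((t^(2*H))^K) + 2^K*((s^(2*H))^K) + (t-s)^(2*H*K) := M
      _ = 2^K*((t^(2*H))^K + (s^(2*H))^K + 2^(-K)*((t-s)^(2*H*K))) := by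
          linear_combination (-(t-s)^(2*H*K)) * i2
  have h2D : (2:ℝ)^(1-K)*((t-s)^(2*H*K)) = 2*(2^(-K)*((t-s)^(2*H*K))) := by
    rw [← h2]
    ring
  constructor
  · rw [hE]
    linarith [LOW, h2D]
  · rw [hE]
    have UP := concave_bound hK0 hK1 (Real.rpow_nonneg ht (2*H)) (Real.rpow_nonneg hs (2*H))
    linarith [UP]

/-- Two-sided bound on the increment second moment of the bifractional Brownian motion:
`2^{-K}|t-s|^{2HK} ≤ R(t,t)+R(s,s)-2R(t,s) ≤ 2^{1-K}|t-s|^{2HK}`. -/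
theorem bifBm_increment_bounds (H K : ℝ) (hH : H ∈ Set.Ioo (0:ℝ) 1)
    (hK : K ∈ Set.Ioc (0:ℝ) 1)
    (R : ℝ → ℝ → ℝ)
    (hR : ∀ t s, R t s = 2 ^ (-K) * ((t ^ (2*H) + s ^ (2*H)) ^ K - |t - s| ^ (2*H*K)))
    (s t : ℝ) (hs : 0 ≤ s) (ht : 0 ≤ t) :
    2 ^ (-K) * |t - s| ^ (2*H*K) ≤ R t t + R s s - 2 * R t s ∧
      R t t + R s s - 2 * R t s ≤ 2 ^ (1-K) * |t - s| ^ (2*H*K) := by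
  rcases le_total s t with h | h
  · have hmain := main_le H K hH hK R hR s t hs h
    rwa [abs_of_nonneg (by linarith : (0:ℝ) ≤ t - s)]
  · have hmain := main_le H K hH hK R hR t s ht h
    have hRst : R t s = R s t := by
      rw [hR t s, hR s t, add_comm (t^(2*H)), abs_sub_comm]
    rw [abs_sub_comm, abs_of_nonneg (by linarith : (0:ℝ) ≤ s - t), hRst]
    exact ⟨by linarith [hmain.1], by linarith [hmain.2]⟩
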